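/- For all constants C_E ≥ 1, L ≥ 0, M ≥ 0, K ≥ 0, T > 0 there exists C ≥ 0 such that the following holds. Let E be a real Banach space, A : E →L[ℝ] E with ‖exp(-tA)‖ ≤ C_E for all t ≥ 0, let g : E → E be Lipschitz with constant L and satisfy ‖g(x)‖ ≤ M for all x ∈ E, let 0 < h ≤ 1, and let u : ℝ → E be differentiable on [0,T] with u'(t) = -A(u t) + g(u t) on [0,T]. Assume that for every t ∈ [0,T] the map σ ↦ exp(-(1-σ)hA)( g(exp(-σhA) (u t)) ) is Lipschitz on [0,1] with constant K·h. Define the Lawson–Euler approximations by u₀ = u 0 and u_{n+1} = exp(-hA)(u_n + h • g(u_n)). Then for every n ∈ ℕ with n·h ≤ T: ‖u(n h) - u_n‖ ≤ C · h. -/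

import Mathlib

/-- The operator exponential `exp(tA)` of a continuous linear operator. -/
noncomputable def opexp {E : Type*} [NormedAddCommGroup E] [NormedSpace ℝ E]
    [CompleteSpace E] (A : E →L[ℝ] E) (t : ℝ) : E →L[ℝ] E :=
  NormedSpace.exp (t • A)

/-!
Write `S = exp(-hA)` and `eₙ = u(nh) - uₙ`. By the variation-of-constants formula, the local
defect `u(t + h) - S(u(t) + h g(u(t)))` is the integral over `[t, t + h]` of
`exp(-(t + h - s)A) g(u(s)) - exp(-hA) g(u(t))`. Replacing `u(s)` by `exp(-(s - t)A) u(t)` costs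
`O(h)` (a priori bound plus Lipschitz continuity of `g`), and what is left is exactly the
regularity condition at `σ = (s - t)/h`; hence the defect is `O(h²)`. Then
`e_{k+1} = S e_k + d_k` with `‖d_k‖ ≤ C_E L h ‖e_k‖ + O(h²)`. Unrolled, `eₙ = ∑ S^(n-1-k) d_k`,
and since every power of `S` is bounded by `C_E`, a discrete Gronwall inequality for the partial
sums gives `‖eₙ‖ = O(h)` uniformly for `nh ≤ T`.
-/

open Set intervalIntegral
open scoped NNReal

section OperatorExponential

variable {E : Type*} [NormedAddCommGroup E] [NormedSpace ℝ E] [CompleteSpace E]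
  (A : E →L[ℝ] E)

@[simp]
lemma opexp_zero : opexp A 0 = 1 := by simp [opexp]

lemma opexp_add (s t : ℝ) : opexp A (s + t) = opexp A s * opexp A t := by
  let +nondep : NormedAlgebra ℚ (E →L[ℝ] E) := .restrictScalars ℚ ℝ (E →L[ℝ] E)
  rw [opexp, add_smul]
  exact NormedSpace.exp_add_of_commute ((Commute.refl A).smul_left s |>.smul_right t)

lemma opexp_pow (t : ℝ) (n : ℕ) : opexp A t ^ n = opexp A (n * t) := by
  induction n with
  | zero => simp
  | succ n ih => rw [pow_succ, ih, ← opexp_add]; push_cast; ring_nf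

lemma hasDerivAt_opexp (t : ℝ) : HasDerivAt (opexp A) (opexp A t * A) t :=
  hasDerivAt_exp_smul_const A t

lemma continuous_opexp : Continuous (opexp A) :=
  continuous_iff_continuousAt.2 fun t => (hasDerivAt_opexp A t).continuousAt

theorem variation_of_constants {u f : ℝ → E} {a b : ℝ} (hab : a ≤ b)
    (hu : ∀ t ∈ Icc a b, HasDerivAt u (-(A (u t)) + f t) t) (hf : ContinuousOn f (Icc a b)) :
    u b - opexp A (a - b) (u a) = ∫ s in a..b, opexp A (s - b) (f s) := by
  have hderiv : ∀ s ∈ uIcc a b,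
      HasDerivAt (fun s => opexp A (s - b) (u s)) (opexp A (s - b) (f s)) s := by
    intro s hs
    rw [uIcc_of_le hab] at hs
    have := ((hasDerivAt_opexp A (s - b)).comp_sub_const s b).clm_apply (hu s hs)
    simpa [mul_apply_eq_comp] using this
  have hint : IntervalIntegrable (fun s => opexp A (s - b) (f s)) MeasureTheory.volume a b := by
    refine ContinuousOn.intervalIntegrable ?_
    rw [uIcc_of_le hab]
    exact ((continuous_opexp A).comp (continuous_sub_right b)).continuousOn.clm_apply hf
  rw [integral_eq_sub_of_hasDerivAt hderiv hint]
  simp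

end OperatorExponential

section LawsonEuler

variable {E : Type*} [NormedAddCommGroup E] [NormedSpace ℝ E] [CompleteSpace E]
  {A : E →L[ℝ] E} {g : E → E} {u : ℝ → E} {C M : ℝ} {L K : ℝ≥0}

variable (A g) in
noncomputable def lawsonEulerStep (h : ℝ) (x : E) : E := opexp A (-h) (x + h • g x)

lemma norm_opexp_neg_apply_le (hA : ∀ t, 0 ≤ t → ‖opexp A (-t)‖ ≤ C) {t : ℝ} (ht : 0 ≤ t)
    (x : E) : ‖opexp A (-t) x‖ ≤ C * ‖x‖ :=
  (opexp A (-t)).le_of_opNorm_le (hA t ht) x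

lemma norm_sub_opexp_apply_le (hA : ∀ t, 0 ≤ t → ‖opexp A (-t)‖ ≤ C)
    (hg : Continuous g) (hgM : ∀ x, ‖g x‖ ≤ M) {a b : ℝ} (hab : a ≤ b)
    (hu : ∀ t ∈ Icc a b, HasDerivAt u (-(A (u t)) + g (u t)) t) :
    ‖u b - opexp A (a - b) (u a)‖ ≤ C * M * (b - a) := by
  have hC : 0 ≤ C := (norm_nonneg _).trans (hA 0 le_rfl)
  have hgu : ContinuousOn (fun t => g (u t)) (Icc a b) :=
    hg.comp_continuousOn fun t ht => (hu t ht).continuousAt.continuousWithinAt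
  rw [variation_of_constants A hab hu hgu, ← abs_of_nonneg (sub_nonneg.2 hab)]
  refine norm_integral_le_of_norm_le_const fun s hs => ?_
  rw [uIoc_of_le hab] at hs
  rw [← neg_sub]
  exact (norm_opexp_neg_apply_le hA (sub_nonneg.2 hs.2) _).trans
    (mul_le_mul_of_nonneg_left (hgM _) hC)

lemma norm_lawsonEulerStep_sub_sub_le (hA : ∀ t, 0 ≤ t → ‖opexp A (-t)‖ ≤ C)
    (hg : LipschitzWith L g) {h : ℝ} (hh : 0 ≤ h) (x y : E) :
    ‖lawsonEulerStep A g h x - lawsonEulerStep A g h y - opexp A (-h) (x - y)‖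
      ≤ C * L * h * ‖x - y‖ := by
  have hC : 0 ≤ C := (norm_nonneg _).trans (hA 0 le_rfl)
  have : lawsonEulerStep A g h x - lawsonEulerStep A g h y - opexp A (-h) (x - y)
      = h • opexp A (-h) (g x - g y) := by
    simp only [lawsonEulerStep, map_add, map_sub, map_smul, smul_sub]
    abel
  rw [this, norm_smul, Real.norm_of_nonneg hh]
  calc h * ‖opexp A (-h) (g x - g y)‖ ≤ h * (C * (L * ‖x - y‖)) := by
        gcongr
        exact (norm_opexp_neg_apply_le hA hh _).trans
          (mul_le_mul_of_nonneg_left (hg.norm_sub_le x y) hC)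
    _ = C * L * h * ‖x - y‖ := by ring

lemma norm_sub_lawsonEulerStep_le (hA : ∀ t, 0 ≤ t → ‖opexp A (-t)‖ ≤ C)
    (hg : LipschitzWith L g) (hgM : ∀ x, ‖g x‖ ≤ M) {a h : ℝ} (hh : 0 < h)
    (hu : ∀ t ∈ Icc a (a + h), HasDerivAt u (-(A (u t)) + g (u t)) t)
    (hreg : LipschitzOnWith K
      (fun σ : ℝ => opexp A (-((1 - σ) * h)) (g (opexp A (-(σ * h)) (u a)))) (Icc 0 1)) :
    ‖u (a + h) - lawsonEulerStep A g h (u a)‖ ≤ (C ^ 2 * L * M * h + K) * h := by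
  have hC : 0 ≤ C := (norm_nonneg _).trans (hA 0 le_rfl)
  have hah : a ≤ a + h := le_add_of_nonneg_right hh.le
  have hgu : ContinuousOn (fun t => g (u t)) (Icc a (a + h)) :=
    hg.continuous.comp_continuousOn fun t ht => (hu t ht).continuousAt.continuousWithinAt
  have hint : IntervalIntegrable (fun s => opexp A (s - (a + h)) (g (u s)))
      MeasureTheory.volume a (a + h) := by
    refine ContinuousOn.intervalIntegrable ?_
    rw [uIcc_of_le hah]
    exact ((continuous_opexp A).comp (continuous_sub_right _)).continuousOn.clm_apply hgu
  have hdefect : u (a + h) - lawsonEulerStep A g h (u a)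
      = ∫ s in a..a + h, (opexp A (s - (a + h)) (g (u s)) - opexp A (-h) (g (u a))) := by
    rw [integral_sub hint intervalIntegrable_const, ← variation_of_constants A hah hu hgu,
      integral_const]
    simp only [lawsonEulerStep, add_sub_cancel_left, sub_add_cancel_left, map_add, map_smul]
    abel
  rw [hdefect]
  refine (norm_integral_le_of_norm_le_const (C := C ^ 2 * L * M * h + K) fun s hs => ?_).trans_eq
    (by rw [add_sub_cancel_left, abs_of_pos hh])
  rw [uIoc_of_le hah] at hs
  -- compare both terms with `exp(-(a + h - s)A) g(exp(-(s - a)A) u(a))`,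
  -- the regularity integrand at `σ = (s - a)/h`
  have hσ : (s - a) / h ∈ Icc (0 : ℝ) 1 :=
    ⟨div_nonneg (by linarith [hs.1]) hh.le, (div_le_one hh).2 (by linarith [hs.2])⟩
  have hapriori : ‖u s - opexp A (a - s) (u a)‖ ≤ C * M * (s - a) :=
    norm_sub_opexp_apply_le hA hg.continuous hgM hs.1.le fun t ht => hu t ⟨ht.1, ht.2.trans hs.2⟩
  have hfreeze :
      ‖opexp A (s - (a + h)) (g (u s) - g (opexp A (a - s) (u a)))‖ ≤ C ^ 2 * L * M * h :=
    calc _ ≤ C * (L * (C * M * (s - a))) := by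
          rw [← neg_sub]
          refine (norm_opexp_neg_apply_le hA (by linarith [hs.2]) _).trans ?_
          gcongr
          exact (hg.norm_sub_le _ _).trans (by gcongr)
      _ ≤ C * (L * (C * M * h)) := by
          have hM : 0 ≤ M := (norm_nonneg _).trans (hgM 0)
          gcongr
          linarith [hs.2]
      _ = C ^ 2 * L * M * h := by ring
  have hsmooth : ‖opexp A (s - (a + h)) (g (opexp A (a - s) (u a))) - opexp A (-h) (g (u a))‖
      ≤ K := by
    have := hreg.norm_sub_le hσ ⟨le_rfl, zero_le_one⟩
    have e1 : -((1 - (s - a) / h) * h) = s - (a + h) := by field_simp; ring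
    have e2 : -((s - a) / h * h) = a - s := by field_simp; ring
    simp only [e1, e2, sub_zero, one_mul, zero_mul, neg_zero, opexp_zero,
      one_apply_eq_self, Real.norm_of_nonneg hσ.1] at this
    exact this.trans (mul_le_of_le_one_right K.2 hσ.2)
  calc _ = ‖opexp A (s - (a + h)) (g (u s) - g (opexp A (a - s) (u a)))
        + (opexp A (s - (a + h)) (g (opexp A (a - s) (u a))) - opexp A (-h) (g (u a)))‖ := by
        rw [map_sub]; abel_nf
    _ ≤ C ^ 2 * L * M * h + K := (norm_add_le _ _).trans (add_le_add hfreeze hsmooth)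

lemma norm_sub_lawsonEulerStep_sub_opexp_le (hA : ∀ t, 0 ≤ t → ‖opexp A (-t)‖ ≤ C)
    (hg : LipschitzWith L g) (hgM : ∀ x, ‖g x‖ ≤ M) {a h : ℝ} (hh : 0 < h)
    (hu : ∀ t ∈ Icc a (a + h), HasDerivAt u (-(A (u t)) + g (u t)) t)
    (hreg : LipschitzOnWith K
      (fun σ : ℝ => opexp A (-((1 - σ) * h)) (g (opexp A (-(σ * h)) (u a)))) (Icc 0 1))
    (y : E) :
    ‖u (a + h) - lawsonEulerStep A g h y - opexp A (-h) (u a - y)‖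
      ≤ C * L * h * ‖u a - y‖ + (C ^ 2 * L * M * h + K) * h := by
  have hlocal := norm_sub_lawsonEulerStep_le hA hg hgM hh hu hreg
  have hprop := norm_lawsonEulerStep_sub_sub_le hA hg hh.le (u a) y
  calc _ = ‖(u (a + h) - lawsonEulerStep A g h (u a)) + (lawsonEulerStep A g h (u a)
        - lawsonEulerStep A g h y - opexp A (-h) (u a - y))‖ := by abel_nf
    _ ≤ _ := (norm_add_le _ _).trans (by linarith)

end LawsonEuler

lemma le_mul_exp_of_le_mul_sum_add {a : ℕ → ℝ} {c β : ℝ} {N : ℕ} (hc : 0 ≤ c) (hβ : 0 ≤ β)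
    (H : ∀ m ≤ N, a m ≤ c * ∑ k ∈ Finset.range m, a k + β * m) :
    a N ≤ β * N * Real.exp (c * N) := by
  have hpow : ∀ m ≤ N, a m ≤ β * m * (1 + c) ^ m := by
    intro m
    induction m using Nat.strong_induction_on with
    | _ m ih =>
      intro hm
      have hsum : ∑ k ∈ Finset.range m, a k ≤ β * m * ∑ k ∈ Finset.range m, (1 + c) ^ k := by
        rw [Finset.mul_sum]
        refine Finset.sum_le_sum fun k hk => ?_
        have hkm := Finset.mem_range.1 hk
        refine (ih k hkm (hkm.le.trans hm)).trans ?_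
        gcongr
      have hgeom := geom_sum_mul_add c m
      rw [add_comm c 1] at hgeom
      calc a m ≤ c * (β * m * ∑ k ∈ Finset.range m, (1 + c) ^ k) + β * m :=
            (H m hm).trans (by gcongr)
        _ = β * m * (1 + c) ^ m := by linear_combination (β * m) * hgeom
  calc a N ≤ β * N * (1 + c) ^ N := hpow N le_rfl
    _ ≤ β * N * Real.exp (c * N) := by
        gcongr
        rw [mul_comm, Real.exp_nat_mul]
        gcongr
        linarith [Real.add_one_le_exp c]

section Stability

variable {𝕜 E : Type*} [NontriviallyNormedField 𝕜] [NormedAddCommGroup E] [NormedSpace 𝕜 E]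

lemma sum_range_pow_apply_sub_apply (S : E →L[𝕜] E) (e : ℕ → E) (m : ℕ) :
    ∑ k ∈ Finset.range m, (S ^ (m - 1 - k)) (e (k + 1) - S (e k)) = e m - (S ^ m) (e 0) := by
  induction m with
  | zero => simp
  | succ m ih =>
    have hpow : ∀ k ∈ Finset.range m, S ^ (m + 1 - 1 - k) = S * S ^ (m - 1 - k) := by
      intro k hk
      rw [← pow_succ', show m + 1 - 1 - k = m - 1 - k + 1 by grind]
    rw [Finset.sum_range_succ, Finset.sum_congr rfl fun k hk => by
      rw [hpow k hk, mul_apply_eq_comp], ← map_sum, ih, show m + 1 - 1 - m = 0 by omega,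
      pow_zero, one_apply_eq_self, pow_succ', mul_apply_eq_comp, map_sub]
    abel

lemma norm_le_of_norm_sub_apply_le (S : E →L[𝕜] E) {C α β : ℝ} (hS : ∀ j, ‖S ^ j‖ ≤ C)
    (hα : 0 ≤ α) (hβ : 0 ≤ β) {e : ℕ → E} (he : e 0 = 0) {n : ℕ}
    (hd : ∀ k < n, ‖e (k + 1) - S (e k)‖ ≤ α * ‖e k‖ + β) :
    ‖e n‖ ≤ C * β * n * Real.exp (C * α * n) := by
  have hC : 0 ≤ C := (norm_nonneg _).trans (hS 0)
  refine le_mul_exp_of_le_mul_sum_add (a := fun m => ‖e m‖) (by positivity) (by positivity)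
    fun m hm => ?_
  calc ‖e m‖ = ‖∑ k ∈ Finset.range m, (S ^ (m - 1 - k)) (e (k + 1) - S (e k))‖ := by
        rw [sum_range_pow_apply_sub_apply, he, map_zero, sub_zero]
    _ ≤ ∑ k ∈ Finset.range m, C * (α * ‖e k‖ + β) := by
        refine (norm_sum_le _ _).trans (Finset.sum_le_sum fun k hk => ?_)
        have hkn : k < n := (Finset.mem_range.1 hk).trans_le hm
        exact (S ^ (m - 1 - k)).le_of_opNorm_le_of_le (hS _) (hd k hkn)
    _ = C * α * ∑ k ∈ Finset.range m, ‖e k‖ + C * β * m := by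
        rw [← Finset.mul_sum, Finset.sum_add_distrib, Finset.sum_const, Finset.card_range,
          nsmul_eq_mul, ← Finset.mul_sum]
        ring

end Stability

/-- Global convergence theorem for Lawson methods (Theorem 4.6, case `p = 1`, Lawson–Euler):
under the uniform semigroup bound, global Lipschitz continuity and boundedness of `g`, and
the commutator-type regularity condition along the exact solution, the Lawson–Euler scheme
converges with order one, uniformly in `A`, `h` and `n`. -/
theorem stmt_16 (C_E L M K T : ℝ) (hCE : 1 ≤ C_E) (hL : 0 ≤ L) (hM : 0 ≤ M)
    (hK : 0 ≤ K) (hT : 0 < T) :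
    ∃ C : ℝ, 0 ≤ C ∧
      ∀ (E : Type) [NormedAddCommGroup E] [NormedSpace ℝ E] [CompleteSpace E]
        (A : E →L[ℝ] E),
        (∀ t : ℝ, 0 ≤ t → ‖opexp A (-t)‖ ≤ C_E) →
        ∀ g : E → E, LipschitzWith (Real.toNNReal L) g →
          (∀ x : E, ‖g x‖ ≤ M) →
        ∀ h : ℝ, 0 < h → h ≤ 1 →
        ∀ u : ℝ → E,
          (∀ t ∈ Set.Icc (0 : ℝ) T, HasDerivAt u (-(A (u t)) + g (u t)) t) →
          (∀ t ∈ Set.Icc (0 : ℝ) T,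
            LipschitzOnWith (Real.toNNReal (K * h))
              (fun σ : ℝ => opexp A (-((1 - σ) * h)) (g (opexp A (-(σ * h)) (u t))))
              (Set.Icc (0 : ℝ) 1)) →
        ∀ un : ℕ → E, un 0 = u 0 →
          (∀ n : ℕ, un (n + 1) = opexp A (-h) (un n + h • g (un n))) →
          ∀ n : ℕ, (n : ℝ) * h ≤ T → ‖u ((n : ℝ) * h) - un n‖ ≤ C * h := by
  refine ⟨C_E * ((C_E ^ 2 * L * M + K) * T) * Real.exp (C_E ^ 2 * L * T), by positivity, ?_⟩
  intro E _ _ _ A hA g hg hgM h hh _ u hu hreg un hun0 hun n hnT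
  have hpow : ∀ j, ‖opexp A (-h) ^ j‖ ≤ C_E := fun j => by
    rw [opexp_pow, mul_neg]
    exact hA _ (by positivity)
  have hstep : ∀ k < n, ‖(u (((k + 1 : ℕ) : ℝ) * h) - un (k + 1))
      - opexp A (-h) (u (k * h) - un k)‖
      ≤ C_E * L * h * ‖u (k * h) - un k‖ + (C_E ^ 2 * L * M * h + K * h) * h := by
    intro k hk
    have hk0 : (0 : ℝ) ≤ k * h := by positivity
    have hkT : (k : ℝ) * h + h ≤ T := by
      have : (k : ℝ) + 1 ≤ n := by exact_mod_cast hk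
      nlinarith
    have := norm_sub_lawsonEulerStep_sub_opexp_le hA hg hgM hh
      (fun t ht => hu t ⟨hk0.trans ht.1, ht.2.trans hkT⟩) (hreg _ ⟨hk0, by linarith⟩) (un k)
    rw [Real.coe_toNNReal _ hL, Real.coe_toNNReal _ (by positivity)] at this
    rwa [hun k, Nat.cast_succ, add_one_mul]
  have herr := norm_le_of_norm_sub_apply_le (opexp A (-h)) hpow (by positivity) (by positivity)
    (e := fun k => u (k * h) - un k) (by simp [hun0]) hstep
  refine herr.trans ?_
  calc _ = C_E * ((C_E ^ 2 * L * M + K) * (n * h)) * Real.exp (C_E ^ 2 * L * (n * h)) * h := by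
        ring_nf
    _ ≤ _ := by gcongr
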